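/- Let a bounded and monotonic routing metric be assigned over a finite connected system S with root r. Then for every metric value m ∈ M, the set of vertices { v ∈ V | m ⪯ μ(v,r) } contains r and induces a connected subgraph of S. -/
import Mathlib


def MetBounded {M W : Type} [LinearOrder M] (met : M → W → M) : Prop :=
  ∀ m w, met m w ≤ m

def MetMonotonic {M W : Type} [LinearOrder M] (met : M → W → M) : Prop :=
  ∀ m m' w, m ≤ m' → met m w ≤ met m' w

def MetStrictlyDecreasing {M W : Type} [LinearOrder M] (met : M → W → M) : Prop :=
  ∀ m : M, (∀ w, met m w < m) ∨ (∀ w, met m w = m)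

def IsMetFixedPoint {M W : Type} (met : M → W → M) (m : M) : Prop :=
  ∀ w, met m w = m

/-- The metric value of a walk, computed from its start with initial value `m`. -/
def walkVal {M W V : Type} (met : M → W → M) (wf : V → V → W) {G : SimpleGraph V} :
    {u v : V} → G.Walk u v → M → M
  | _, _, SimpleGraph.Walk.nil, m => m
  | u, _, SimpleGraph.Walk.cons (v := x) _ q, m => walkVal met wf q (met m (wf u x))

/-- `mu v p` is the maximum, over simple paths from `p` to `v`, of the path metric. -/
def IsMaxMetric {M W V : Type} [LinearOrder M] (met : M → W → M) (wf : V → V → W)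
    (G : SimpleGraph V) (mr : M) (mu : V → V → M) : Prop :=
  ∀ v p : V,
    (∃ q : G.Walk p v, q.IsPath ∧ walkVal met wf q mr = mu v p) ∧
    (∀ q : G.Walk p v, q.IsPath → walkVal met wf q mr ≤ mu v p)

lemma walkVal_le {M W V : Type} [LinearOrder M] (met : M → W → M)
    (hbound : MetBounded met) (wf : V → V → W) {G : SimpleGraph V} :
    ∀ {u v : V} (q : G.Walk u v) (m : M), walkVal met wf q m ≤ m := by
  intro u v q
  induction q with
  | nil => intro m; exact le_refl m
  | cons h q ih => intro m; exact (ih _).trans (hbound _ _)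

lemma walkVal_append {M W V : Type} (met : M → W → M) (wf : V → V → W)
    {G : SimpleGraph V} :
    ∀ {u v x : V} (p : G.Walk u v) (q : G.Walk v x) (m : M),
      walkVal met wf (p.append q) m = walkVal met wf q (walkVal met wf p m) := by
  intro u v x p
  induction p with
  | nil => intro q m; rfl
  | cons h p ih => intro q m; simp [SimpleGraph.Walk.cons_append, walkVal, ih]

lemma reachable_induce {V : Type} {G : SimpleGraph V} {s : Set V} :
    ∀ {a b : V} (q : G.Walk a b) (h : ∀ u ∈ q.support, u ∈ s),
      (G.induce s).Reachable ⟨a, h a q.start_mem_support⟩ ⟨b, h b q.end_mem_support⟩ := by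
  intro a b q
  induction q with
  | nil => intro h; exact SimpleGraph.Reachable.refl _
  | @cons a x b hadj q ih =>
    intro h
    have hx : x ∈ s := h x (by simp)
    have h2 : ∀ u ∈ q.support, u ∈ s := fun u hu => h u (by simp [hu])
    have hadj' : (G.induce s).Adj ⟨a, h a (SimpleGraph.Walk.start_mem_support _)⟩ ⟨x, hx⟩ := by
      simp [SimpleGraph.comap_adj, hadj]
    exact (hadj'.reachable).trans (ih h2)

/-- For a bounded monotonic metric assigned over a finite connected
system with root `r`, for every metric value `m` the set `{v | m ⪯ μ(v,r)}`
contains `r` and induces a connected subgraph. -/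
theorem statement_5 {M W V : Type} [LinearOrder M] [Fintype V]
    (met : M → W → M) (mr : M) (hmr : ∀ m : M, m ≤ mr)
    (hbound : MetBounded met) (hmono : MetMonotonic met)
    (G : SimpleGraph V) (hconn : G.Connected) (r : V)
    (wf : V → V → W) (hwf : ∀ u v : V, wf u v = wf v u)
    (mu : V → V → M) (hmu : IsMaxMetric met wf G mr mu) :
    ∀ m : M, r ∈ {v : V | m ≤ mu v r} ∧ (G.induce {v : V | m ≤ mu v r}).Connected := by
  intro m
  classical
  set s : Set V := {v : V | m ≤ mu v r} with hs
  have hr : r ∈ s := by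
    have := (hmu r r).2 SimpleGraph.Walk.nil SimpleGraph.Walk.IsPath.nil
    exact le_trans (hmr m) this
  refine ⟨hr, ?_⟩
  rw [SimpleGraph.connected_iff]
  refine ⟨?_, ⟨⟨r, hr⟩⟩⟩
  -- Preconnected: show every vertex reachable from root
  have key : ∀ v : s, (G.induce s).Reachable v ⟨r, hr⟩ := by
    rintro ⟨v, hv⟩
    obtain ⟨q, hq, hval⟩ := (hmu v r).1
    have hsupp : ∀ u ∈ q.support, u ∈ s := by
      intro u hu
      have hspec := q.take_spec hu
      have h0 := congrArg (fun w : G.Walk r v => walkVal met wf w mr) hspec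
      simp only [walkVal_append] at h0
      have h1 : walkVal met wf q mr ≤ walkVal met wf (q.takeUntil u hu) mr := by
        rw [← h0]
        exact walkVal_le met hbound wf _ _
      have h2 : walkVal met wf (q.takeUntil u hu) mr ≤ mu u r :=
        (hmu u r).2 _ (hq.takeUntil hu)
      have : m ≤ mu u r := le_trans hv (hval ▸ (h1.trans h2))
      exact this
    have := reachable_induce (s := s) q hsupp
    exact this.symm
  intro a b
  exact (key a).trans (key b).symm
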